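/- arXiv:1312.2514 — 2 statements merged into one kernel-verified Lean document; each statement's English description precedes it below -/
import Mathlib

section
/- Let k be a commutative ring, σ and τ types, and let π : MvPolynomial (σ ⊕ τ) k →ₐ[k] MvPolynomial τ k be the k-algebra homomorphism determined on variables by X (Sum.inl s) ↦ 0 for s ∈ σ and X (Sum.inr t) ↦ X t for t ∈ τ. Let N ≥ 1 be a natural number and suppose the ideal J of MvPolynomial τ k is generated by a set of polynomials each of which is homogeneous (with respect to total degree) of total degree at most N. Then the ideal Ideal.comap π J of MvPolynomial (σ ⊕ τ) k is generated by a set of polynomials each of which is homogeneous of total degree at most N. -/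
open MvPolynomial

/-- Degree-bound form of the key algebraic step of Theorem A: if `π : k[x_s, y_t] → k[y_t]`
kills the variables `X (Sum.inl s)` and sends `X (Sum.inr t)` to `X t`, and the ideal `J`
is generated by polynomials homogeneous of total degree at most `N` (with `N ≥ 1`), then
`Ideal.comap π J` is generated by polynomials homogeneous of total degree at most `N`. -/
theorem comap_generated_in_degree_le
    {k : Type*} [CommRing k] {σ τ : Type*}
    (π : MvPolynomial (σ ⊕ τ) k →ₐ[k] MvPolynomial τ k)
    (hπ : ∀ x : σ ⊕ τ,
      π (X x) = Sum.elim (fun _ : σ => (0 : MvPolynomial τ k)) (fun t : τ => X t) x)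
    (N : ℕ) (hN : 1 ≤ N) (J : Ideal (MvPolynomial τ k))
    (hJ : ∃ G : Set (MvPolynomial τ k), J = Ideal.span G ∧
        ∀ g ∈ G, ∃ n ≤ N, g.IsHomogeneous n) :
    ∃ G' : Set (MvPolynomial (σ ⊕ τ) k), Ideal.comap π J = Ideal.span G' ∧
        ∀ g ∈ G', ∃ n ≤ N, g.IsHomogeneous n := by
  obtain ⟨G, hJG, hGhom⟩ := hJ
  set I : Ideal (MvPolynomial (σ ⊕ τ) k) :=
    Ideal.span (Set.range fun s : σ => (X (Sum.inl s) : MvPolynomial (σ ⊕ τ) k)) with hI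
  -- π ∘ rename inr = id
  have hsec : ∀ p : MvPolynomial τ k, π (rename Sum.inr p) = p := by
    intro p
    have : π.comp (rename (Sum.inr : τ → σ ⊕ τ)) = AlgHom.id k _ := by
      apply MvPolynomial.algHom_ext
      intro t
      simp [hπ]
    simpa using DFunLike.congr_fun this p
  -- p - rename inr (π p) ∈ I
  have hker : ∀ p : MvPolynomial (σ ⊕ τ) k, p - rename Sum.inr (π p) ∈ I := by
    intro p
    have hmk : (Ideal.Quotient.mkₐ k I).comp
        ((rename (Sum.inr : τ → σ ⊕ τ)).comp π) = Ideal.Quotient.mkₐ k I := by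
      apply MvPolynomial.algHom_ext
      intro x
      cases x with
      | inl s =>
        have hx : (X (Sum.inl s) : MvPolynomial (σ ⊕ τ) k) ∈ I :=
          Ideal.subset_span ⟨s, rfl⟩
        simp [hπ, Ideal.Quotient.eq_zero_iff_mem.mpr hx]
      | inr t => simp [hπ]
    have := DFunLike.congr_fun hmk p
    simp only [AlgHom.comp_apply] at this
    rw [← Ideal.Quotient.eq]
    simpa [Ideal.Quotient.mkₐ_eq_mk] using this.symm
  refine ⟨(rename (Sum.inr : τ → σ ⊕ τ)) '' G ∪
      Set.range (fun s : σ => (X (Sum.inl s) : MvPolynomial (σ ⊕ τ) k)), ?_, ?_⟩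
  · apply le_antisymm
    · intro p hp
      have hπp : π p ∈ J := hp
      have h1 : rename (Sum.inr : τ → σ ⊕ τ) (π p) ∈
          Ideal.span ((rename (Sum.inr : τ → σ ⊕ τ)) '' G) := by
        have : rename (Sum.inr : τ → σ ⊕ τ) (π p) ∈
            Ideal.map (rename (Sum.inr : τ → σ ⊕ τ)).toRingHom J :=
          Ideal.mem_map_of_mem _ hπp
        rwa [hJG, Ideal.map_span] at this
      have h2 : p - rename Sum.inr (π p) ∈ I := hker p
      have := add_mem
        (Ideal.span_mono Set.subset_union_left h1)
        (Ideal.span_mono Set.subset_union_right (by rw [← hI]; exact h2))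
      simp at this; simpa using this
    · rw [Ideal.span_le]
      rintro g (⟨g₀, hg₀, rfl⟩ | ⟨s, rfl⟩)
      · show π _ ∈ J
        rw [hsec, hJG]
        exact Ideal.subset_span hg₀
      · show π _ ∈ J
        rw [hπ]
        simp
  · rintro g (⟨g₀, hg₀, rfl⟩ | ⟨s, rfl⟩)
    · obtain ⟨n, hn, hhom⟩ := hGhom g₀ hg₀
      exact ⟨n, hn, hhom.rename_isHomogeneous⟩
    · exact ⟨1, hN, isHomogeneous_X _ _⟩
end

section
/- Let d, gX, gY, r be integers with d ≥ 3, gX ≥ 5, gY ≥ 1, and r ≥ 1, and set b = (2·gX − 2) − d·(2·gY − 2). Suppose that, as rational numbers, either d·r ≤ b·r/4 or d·r ≤ (b − 2)·r/(2·gX − 4) + r. Then 4·d ≤ b. -/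
/-!
Dividing out the rank `r`, case (i) of Mercat's bound is `4d ≤ b` itself, while case (ii)
becomes `(d - 1)(2gX - 4) ≤ b - 2`. Since `gY ≥ 1`, the right-hand side is at most
`2gX - 4`, so case (ii) forces `d ≤ 2` and cannot occur when `d ≥ 3`.
-/

section LinearOrderedField

variable {K : Type*} [Field K] [LinearOrder K] [IsStrictOrderedRing K]

lemma le_of_mul_le_mul_div_four {d b r : K} (hr : 0 < r) (h : d * r ≤ b * r / 4) :
    4 * d ≤ b := by
  rw [le_div_iff₀ four_pos] at h
  exact le_of_mul_le_mul_right (by linarith) hr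

lemma sub_one_mul_le_of_mul_le_div_add {d a c r : K} (hr : 0 < r) (hc : 0 < c)
    (h : d * r ≤ a * r / c + r) : (d - 1) * c ≤ a := by
  have h' : (d - 1) * r ≤ a * r / c := by linarith
  rw [le_div_iff₀ hc] at h'
  exact le_of_mul_le_mul_right (by linarith) hr

end LinearOrderedField

/-- Numerical core of Proposition 4.5 (bound-final-form), proving Proposition D: the two
cases of Mercat's Clifford-type theorem applied to an `f`-Ulrich bundle of rank `r` force
`4d ≤ b`. -/
theorem ulrich_branch_bound (d gX gY r b : ℤ) (hd : 3 ≤ d) (hgX : 5 ≤ gX) (hgY : 1 ≤ gY)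
    (hr : 1 ≤ r) (hb : b = (2 * gX - 2) - d * (2 * gY - 2))
    (hmercat : ((d : ℚ) * r ≤ (b : ℚ) * r / 4) ∨
      ((d : ℚ) * r ≤ ((b : ℚ) - 2) * r / (2 * (gX : ℚ) - 4) + r)) :
    4 * d ≤ b := by
  have hr' : (0 : ℚ) < r := by exact_mod_cast hr
  rcases hmercat with hclifford | hmercat
  · exact_mod_cast le_of_mul_le_mul_div_four hr' hclifford
  · have hgX' : (0 : ℚ) < 2 * gX - 4 := by
      have : (5 : ℚ) ≤ gX := by exact_mod_cast hgX
      linarith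
    have hcase : (d - 1) * (2 * gX - 4) ≤ b - 2 := by
      exact_mod_cast sub_one_mul_le_of_mul_le_div_add hr' hgX' hmercat
    have hbranch : b - 2 ≤ 2 * gX - 4 := by
      nlinarith
    nlinarith
end
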